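/- For every multi-agent cognitive model M, every world w of M, every agent i, and every formula φ of L_DLCA: agent i desires that φ at w (i.e., Worst_{i,D}(w) ∩ ||φ||_M = ∅) if and only if M,w ⊨ [≡_i ; ([≻_{i,D}]⊥)?] ¬φ. -/
import Mathlib


/-- The two flavours of cognitive relations: plausibility (P) and desirability (D). -/
inductive Tau : Type
  | P
  | D

mutual
/-- Formulas of the language L_DLCA. -/
inductive Form (Atm Nom Agt : Type) : Type where
  | atom : Atm → Form Atm Nom Agt
  | nom  : Nom → Form Atm Nom Agt
  | bot  : Form Atm Nom Agt
  | neg  : Form Atm Nom Agt → Form Atm Nom Agt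
  | and  : Form Atm Nom Agt → Form Atm Nom Agt → Form Atm Nom Agt
  | box  : Prog Atm Nom Agt → Form Atm Nom Agt → Form Atm Nom Agt

/-- Cognitive programs of the language L_DLCA. -/
inductive Prog (Atm Nom Agt : Type) : Type where
  | eqv   : Agt → Prog Atm Nom Agt                                  -- ≡_i
  | pre   : Agt → Tau → Prog Atm Nom Agt                            -- ⪯_{i,τ}
  | preC  : Agt → Tau → Prog Atm Nom Agt                            -- ⪯_{i,τ}^∼
  | seq   : Prog Atm Nom Agt → Prog Atm Nom Agt → Prog Atm Nom Agt  -- π ; π'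
  | union : Prog Atm Nom Agt → Prog Atm Nom Agt → Prog Atm Nom Agt  -- π ∪ π'
  | inter : Prog Atm Nom Agt → Prog Atm Nom Agt → Prog Atm Nom Agt  -- π ∩ π'
  | conv  : Prog Atm Nom Agt → Prog Atm Nom Agt                     -- −π
  | test  : Form Atm Nom Agt → Prog Atm Nom Agt                     -- φ?
end

/-- Multi-agent cognitive model. -/
structure MCM (Atm Nom Agt : Type) where
  W : Type
  pre : Agt → Tau → W → W → Prop
  eqv : Agt → W → W → Prop
  valAtm : W → Atm → Prop
  valNom : W → Nom → Prop
  pre_refl : ∀ i τ w, pre i τ w w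
  pre_trans : ∀ i τ w v u, pre i τ w v → pre i τ v u → pre i τ w u
  eqv_refl : ∀ i w, eqv i w w
  eqv_symm : ∀ i w v, eqv i w v → eqv i v w
  eqv_trans : ∀ i w v u, eqv i w v → eqv i v u → eqv i w u
  c1 : ∀ i τ w v, pre i τ w v → eqv i w v
  c2 : ∀ i τ w v, eqv i w v → pre i τ w v ∨ pre i τ v w
  c3 : ∀ w, ∃ x, valNom w x
  c4 : ∀ w v x, valNom w x → valNom v x → w = v

variable {Atm Nom Agt : Type}

mutual
/-- Truth of a formula at a world of an MCM. -/
def MCM.sat (M : MCM Atm Nom Agt) : M.W → Form Atm Nom Agt → Prop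
  | _, .bot => False
  | w, .atom p => M.valAtm w p
  | w, .nom x => M.valNom w x
  | w, .neg φ => ¬ M.sat w φ
  | w, .and φ ψ => M.sat w φ ∧ M.sat w ψ
  | w, .box π φ => ∀ v, M.rel π w v → M.sat v φ

/-- Accessibility relation interpreting a program in an MCM. -/
def MCM.rel (M : MCM Atm Nom Agt) : Prog Atm Nom Agt → M.W → M.W → Prop
  | .eqv i, w, v => M.eqv i w v
  | .pre i τ, w, v => M.pre i τ w v
  | .preC i τ, w, v => M.eqv i w v ∧ ¬ M.pre i τ w v
  | .seq π π', w, v => ∃ u, M.rel π w u ∧ M.rel π' u v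
  | .union π π', w, v => M.rel π w v ∨ M.rel π' w v
  | .inter π π', w, v => M.rel π w v ∧ M.rel π' w v
  | .conv π, w, v => M.rel π v w
  | .test φ, w, v => w = v ∧ M.sat w φ
end

/-- ≺_{i,τ}  :=  ⪯_{i,τ} ∩ (−(⪯_{i,τ}^∼)) -/
def Prog.lt (i : Agt) (τ : Tau) : Prog Atm Nom Agt :=
  .inter (.pre i τ) (.conv (.preC i τ))

/-- ≻_{i,τ}  :=  (−⪯_{i,τ}) ∩ ⪯_{i,τ}^∼ -/
def Prog.gt (i : Agt) (τ : Tau) : Prog Atm Nom Agt :=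
  .inter (.conv (.pre i τ)) (.preC i τ)

/-- ⟨π⟩φ := ¬[π]¬φ -/
def Form.dia (π : Prog Atm Nom Agt) (φ : Form Atm Nom Agt) : Form Atm Nom Agt :=
  .neg (.box π (.neg φ))

/-- Best_{i,P}(w) -/
def MCM.BestP (M : MCM Atm Nom Agt) (i : Agt) (w : M.W) : Set M.W :=
  {v | M.eqv i w v ∧ ∀ u, M.eqv i w u → M.pre i Tau.P u v}


/-- Worst_{i,D}(w) -/
def MCM.WorstD (M : MCM Atm Nom Agt) (i : Agt) (w : M.W) : Set M.W :=
  {v | M.eqv i w v ∧ ∀ u, M.eqv i w u → M.pre i Tau.D v u}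

/-- ||φ||_M : the truth set of φ in M. -/
def MCM.truthSet (M : MCM Atm Nom Agt) (φ : Form Atm Nom Agt) : Set M.W :=
  {v | M.sat v φ}

/-- ||φ||_{i,w,M} : the truth set of φ from i's point of view at w in M. -/
def MCM.truthSetAt (M : MCM Atm Nom Agt) (i : Agt) (w : M.W)
    (φ : Form Atm Nom Agt) : Set M.W :=
  {v | M.sat v φ ∧ M.eqv i w v}

/-- agent i desires that φ at w (Worst_{i,D}(w) ∩ ||φ||_M = ∅) iff
    M,w ⊨ [≡_i ; ([≻_{i,D}]⊥)?] ¬φ. -/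
theorem desire_characterization
    [Countable Atm] [Infinite Atm] [Countable Nom] [Infinite Nom] [Finite Agt]
    (M : MCM Atm Nom Agt) (w : M.W) (i : Agt) (φ : Form Atm Nom Agt) :
    M.WorstD i w ∩ M.truthSet φ = ∅ ↔
      M.sat w (.box (.seq (.eqv i) (.test (.box (Prog.gt i Tau.D) .bot)))
        (.neg φ)) := by
  simp only [MCM.sat, MCM.rel, Prog.gt]
  constructor
  · intro h
    rintro u ⟨v, hwv, rfl, htest⟩ hsat
    have : v ∈ M.WorstD i w ∩ M.truthSet φ := by
      refine ⟨⟨hwv, fun t hwt => ?_⟩, hsat⟩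
      by_contra hnp
      have hvt : M.eqv i v t := M.eqv_trans i v w t (M.eqv_symm i w v hwv) hwt
      have hp : M.pre i Tau.D t v := by
        rcases M.c2 i Tau.D v t hvt with h1 | h1
        · exact absurd h1 hnp
        · exact h1
      exact htest t ⟨hp, hvt, hnp⟩
    rw [h] at this
    exact this
  · intro h
    ext v
    simp only [Set.mem_inter_iff, Set.mem_empty_iff_false, iff_false]
    rintro ⟨⟨hwv, hworst⟩, hsat⟩
    refine h v ⟨v, hwv, rfl, ?_⟩ hsat
    rintro t ⟨htv, hvt, hnp⟩
    exact hnp (hworst t (M.eqv_trans i w v t hwv hvt))
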